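/- arXiv:1810.01309 — 2 statements merged into one kernel-verified Lean document; each statement's English description precedes it below -/
import Mathlib

section
/- Let m > 0, a ∈ (0, m), ν = √(m²−a²)/m, and C ∈ ℂ². Define ψ_C^a = (φ_C^a, χ_C^a)ᵀ with φ_C^a(x) = C e^{−√(m²−a²)|x|}/|x|^{1−a/m} and χ_C^a = √((m−a)/(m+a)) (i σ·x̂) φ_C^a. Then ψ_C^a is a distributional solution of the Dirac–Coulomb eigenvalue equation (−i α·∇ + mβ − ν/|x| − a) ψ_C^a = 0 on ℝ³ \ {0}. -/
open Matrix MeasureTheory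

noncomputable section

/-- The Pauli matrices. -/
def Pauli : Fin 3 → Matrix (Fin 2) (Fin 2) ℂ :=
  ![!![0, 1; 1, 0], !![0, -Complex.I; Complex.I, 0], !![1, 0; 0, -1]]

/-- The Dirac matrix `β = diag(I₂, -I₂)`. -/
def diracBeta : Matrix (Fin 2 ⊕ Fin 2) (Fin 2 ⊕ Fin 2) ℂ := Matrix.fromBlocks 1 0 0 (-1)

/-- The Dirac matrices `α_j = [[0, σ_j], [σ_j, 0]]`. -/
def diracAlpha (j : Fin 3) : Matrix (Fin 2 ⊕ Fin 2) (Fin 2 ⊕ Fin 2) ℂ :=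
  Matrix.fromBlocks 0 (Pauli j) (Pauli j) 0

/-- `σ·x̂` for `x ≠ 0`, with `x̂ = x/|x|`. -/
def sigmaHat (x : EuclideanSpace ℝ (Fin 3)) : Matrix (Fin 2) (Fin 2) ℂ :=
  ∑ j, ((x j / ‖x‖ : ℝ) : ℂ) • Pauli j

/-- The `j`-th partial derivative of a 4-spinor field. -/
def pd (j : Fin 3) (ψ : EuclideanSpace ℝ (Fin 3) → (Fin 2 ⊕ Fin 2) → ℂ)
    (x : EuclideanSpace ℝ (Fin 3)) : (Fin 2 ⊕ Fin 2) → ℂ :=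
  fderiv ℝ ψ x (EuclideanSpace.single j 1)

/-- The Dirac kinetic operator `-i α·∇`. -/
def diracKin (ψ : EuclideanSpace ℝ (Fin 3) → (Fin 2 ⊕ Fin 2) → ℂ)
    (x : EuclideanSpace ℝ (Fin 3)) : (Fin 2 ⊕ Fin 2) → ℂ :=
  (-Complex.I) • ∑ j, (diracAlpha j).mulVec (pd j ψ x)

/-! With `r = ‖x‖`, the upper spinor is `f(r) C` and, since `σ·x̂ = (σ·x)/r`, the lower one is
`(f(r)/r) σ·x (c i C)` with `f(r) = e^{-kr}/r^q`, `k = √(m²-a²)`, `q = 1 - a/m`,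
`c = √((m-a)/(m+a))`. The Pauli relations `∑ σⱼ² = 3` and `(σ·x)² = r²` give
`σ·∇(g(r) w) = (g'/r) σ·x w` and `σ·∇(g(r) σ·x w) = (r g' + 3 g) w`, so the Dirac system
collapses to the two scalar equations `c (f' + 2f/r) + (m - a - ν/r) f = 0` and
`f' + c (m + a + ν/r) f = 0`. With `f' = -(k + q/r) f` these are the identities
`c k = m - a`, `c (2 - q) = ν`, `c (m + a) = k` and `c ν = q`. -/

local notation "E3" => EuclideanSpace ℝ (Fin 3)

def sigmaDot (v : E3) : Matrix (Fin 2) (Fin 2) ℂ := ∑ j, (v j : ℂ) • Pauli j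

lemma sigmaDot_eq_sum_smul (x : E3) : sigmaDot x = ∑ j, x j • Pauli j := by
  simp [sigmaDot, Complex.coe_smul]

lemma sigmaDot_single (j : Fin 3) : sigmaDot (EuclideanSpace.single j 1) = Pauli j := by
  simp [sigmaDot, PiLp.single_apply]

lemma sigmaHat_eq_smul_sigmaDot (x : E3) : sigmaHat x = ((‖x‖⁻¹ : ℝ) : ℂ) • sigmaDot x := by
  simp only [sigmaHat, sigmaDot, Finset.smul_sum, smul_smul, div_eq_inv_mul]
  push_cast
  rfl

lemma sum_pauli_mulVec_pauli_mulVec (w : Fin 2 → ℂ) :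
    ∑ j, Pauli j *ᵥ (Pauli j *ᵥ w) = (3 : ℝ) • w := by
  ext i
  fin_cases i <;> simp [Pauli, Fin.sum_univ_three] <;> linear_combination (-w _) * Complex.I_sq

lemma sigmaDot_mulVec_sigmaDot_mulVec (v : E3) (w : Fin 2 → ℂ) :
    sigmaDot v *ᵥ (sigmaDot v *ᵥ w) = ‖v‖ ^ 2 • w := by
  rw [EuclideanSpace.norm_sq_eq]
  ext i
  fin_cases i <;> simp [sigmaDot, Pauli, Fin.sum_univ_three, mulVec, dotProduct, Fin.sum_univ_two] <;>
    ring_nf <;> simp [Complex.I_sq]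

def sigmaDotMulVec (w : Fin 2 → ℂ) : E3 →L[ℝ] Fin 2 → ℂ :=
  LinearMap.toContinuousLinearMap
    { toFun := fun v => sigmaDot v *ᵥ w
      map_add' := fun u v => by simp [sigmaDot, add_smul, Finset.sum_add_distrib, add_mulVec]
      map_smul' := fun r v => by
        rw [RingHom.id_apply, ← smul_mulVec]
        simp only [sigmaDot, Finset.smul_sum, ← Complex.coe_smul, smul_smul, PiLp.smul_apply,
          smul_eq_mul, Complex.ofReal_mul] }

@[simp]
lemma sigmaDotMulVec_apply (w : Fin 2 → ℂ) (v : E3) : sigmaDotMulVec w v = sigmaDot v *ᵥ w := rfl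

lemma diracBeta_mulVec_sumElim (u v : Fin 2 → ℂ) :
    diracBeta *ᵥ Sum.elim u v = Sum.elim u (-v) := by
  ext (i | i) <;> fin_cases i <;> simp [diracBeta, fromBlocks_mulVec]

lemma diracAlpha_mulVec_sumElim (j : Fin 3) (u v : Fin 2 → ℂ) :
    diracAlpha j *ᵥ Sum.elim u v = Sum.elim (Pauli j *ᵥ v) (Pauli j *ᵥ u) := by
  simp [diracAlpha, fromBlocks_mulVec]

def sigmaGrad (φ : E3 → Fin 2 → ℂ) (x : E3) : Fin 2 → ℂ :=
  ∑ j, Pauli j *ᵥ fderiv ℝ φ x (EuclideanSpace.single j 1)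

lemma pd_sumElim {φ χ : E3 → Fin 2 → ℂ} {x : E3} (hφ : DifferentiableAt ℝ φ x)
    (hχ : DifferentiableAt ℝ χ x) (j : Fin 3) :
    pd j (fun y => Sum.elim (φ y) (χ y)) x =
      Sum.elim (fderiv ℝ φ x (EuclideanSpace.single j 1))
        (fderiv ℝ χ x (EuclideanSpace.single j 1)) := by
  let e := (ContinuousLinearEquiv.sumPiEquivProdPi ℝ (Fin 2) (Fin 2) fun _ => ℂ).symm
  have he : (fun y => Sum.elim (φ y) (χ y)) = e ∘ fun y => (φ y, χ y) := rfl
  rw [pd, he, e.comp_fderiv, hφ.fderiv_prodMk hχ]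
  rfl

lemma diracKin_sumElim {φ χ : E3 → Fin 2 → ℂ} {x : E3} (hφ : DifferentiableAt ℝ φ x)
    (hχ : DifferentiableAt ℝ χ x) :
    diracKin (fun y => Sum.elim (φ y) (χ y)) x =
      Sum.elim (-Complex.I • sigmaGrad χ x) (-Complex.I • sigmaGrad φ x) := by
  ext (s | s) <;>
    simp [diracKin, pd_sumElim hφ hχ, diracAlpha_mulVec_sumElim, sigmaGrad, Finset.sum_apply]

lemma hasFDerivAt_norm {E : Type*} [NormedAddCommGroup E] [InnerProductSpace ℝ E] {x : E}
    (hx : x ≠ 0) : HasFDerivAt (fun y : E => ‖y‖) (‖x‖⁻¹ • innerSL ℝ x) x := by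
  have hsqrt := (Real.hasDerivAt_sqrt (pow_ne_zero 2 (norm_ne_zero_iff.mpr hx))).comp_hasFDerivAt x
    (hasStrictFDerivAt_norm_sq x).hasFDerivAt
  simp only [Function.comp_def, Real.sqrt_sq (norm_nonneg _)] at hsqrt
  refine hsqrt.congr_fderiv ?_
  ext v
  simp only [one_div, _root_.smul_apply, coe_innerSL_apply, nsmul_eq_mul, Nat.cast_ofNat,
    smul_eq_mul]
  field_simp

lemma hasFDerivAt_comp_norm {E : Type*} [NormedAddCommGroup E] [InnerProductSpace ℝ E] {x : E}
    {f : ℝ → ℝ} {f' : ℝ} (hx : x ≠ 0) (hf : HasDerivAt f f' ‖x‖) :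
    HasFDerivAt (fun y : E => f ‖y‖) ((f' / ‖x‖) • innerSL ℝ x) x := by
  simpa only [Function.comp_def, smul_smul, div_eq_mul_inv] using
    hf.comp_hasFDerivAt x (hasFDerivAt_norm hx)

lemma innerSL_single (x : E3) (j : Fin 3) :
    innerSL ℝ x (EuclideanSpace.single j 1) = x j := by
  simp [EuclideanSpace.inner_single_right]

lemma sigmaGrad_radial {f : ℝ → ℝ} {f' : ℝ} {x : E3} (hx : x ≠ 0) (hf : HasDerivAt f f' ‖x‖)
    (w : Fin 2 → ℂ) :
    sigmaGrad (fun y => f ‖y‖ • w) x = (f' / ‖x‖) • sigmaDot x *ᵥ w := by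
  rw [sigmaGrad, ((hasFDerivAt_comp_norm hx hf).smul_const w).fderiv, sigmaDot_eq_sum_smul,
    sum_mulVec, Finset.smul_sum]
  refine Finset.sum_congr rfl fun j _ => ?_
  simp only [ContinuousLinearMap.smulRight_apply, _root_.smul_apply, innerSL_single,
    smul_eq_mul, mulVec_smul, smul_mulVec, smul_smul]

lemma sigmaGrad_radial_sigmaDot {f : ℝ → ℝ} {f' : ℝ} {x : E3} (hx : x ≠ 0)
    (hf : HasDerivAt f f' ‖x‖) (w : Fin 2 → ℂ) :
    sigmaGrad (fun y => f ‖y‖ • sigmaDot y *ᵥ w) x = (‖x‖ * f' + 3 * f ‖x‖) • w := by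
  have h : HasFDerivAt (fun y => f ‖y‖ • sigmaDot y *ᵥ w) _ x :=
    (hasFDerivAt_comp_norm hx hf).fun_smul (sigmaDotMulVec w).hasFDerivAt
  rw [sigmaGrad, h.fderiv]
  simp only [_root_.add_apply, _root_.smul_apply, ContinuousLinearMap.smulRight_apply,
    innerSL_single, sigmaDotMulVec_apply, sigmaDot_single, smul_eq_mul]
  calc ∑ j, Pauli j *ᵥ (f ‖x‖ • Pauli j *ᵥ w + (f' / ‖x‖ * x j) • sigmaDot x *ᵥ w)
      = f ‖x‖ • ∑ j, Pauli j *ᵥ (Pauli j *ᵥ w)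
          + (f' / ‖x‖) • sigmaDot x *ᵥ (sigmaDot x *ᵥ w) := by
        generalize sigmaDot x *ᵥ w = v
        rw [sigmaDot_eq_sum_smul]
        simp only [mulVec_add, mulVec_smul, Finset.sum_add_distrib, Finset.smul_sum, sum_mulVec,
          smul_mulVec, smul_smul]
    _ = (‖x‖ * f' + 3 * f ‖x‖) • w := by
        rw [sum_pauli_mulVec_pauli_mulVec, sigmaDot_mulVec_sigmaDot_mulVec, smul_smul, smul_smul,
          ← add_smul]
        congr 1
        field_simp
        ring

/-- The spinor `ψ_C^a` of the statement with a general radial profile `f` in place of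
`e^{-√(m²-a²) r} / r^{1-a/m}` and a general constant `c` in place of `√((m-a)/(m+a))`. -/
def diracAnsatz (f : ℝ → ℝ) (c : ℝ) (C : Fin 2 → ℂ) (y : E3) : Fin 2 ⊕ Fin 2 → ℂ :=
  Sum.elim (((f ‖y‖ : ℝ) : ℂ) • C) (c • (Complex.I • sigmaHat y *ᵥ (((f ‖y‖ : ℝ) : ℂ) • C)))

lemma smul_I_smul_sigmaHat_mulVec (c t : ℝ) (y : E3) (C : Fin 2 → ℂ) :
    c • (Complex.I • sigmaHat y *ᵥ ((t : ℂ) • C)) =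
      (t / ‖y‖) • sigmaDot y *ᵥ (c • Complex.I • C) := by
  rw [sigmaHat_eq_smul_sigmaDot]
  ext i
  fin_cases i <;> simp [smul_mulVec, mulVec_smul, Complex.real_smul] <;> ring

lemma diracAnsatz_eq (f : ℝ → ℝ) (c : ℝ) (C : Fin 2 → ℂ) :
    diracAnsatz f c C =
      fun y => Sum.elim (f ‖y‖ • C) ((f ‖y‖ / ‖y‖) • sigmaDot y *ᵥ (c • Complex.I • C)) := by
  funext y
  rw [diracAnsatz, smul_I_smul_sigmaHat_mulVec, Complex.coe_smul]

lemma diracKin_diracAnsatz {f : ℝ → ℝ} {f' : ℝ} (c : ℝ) (C : Fin 2 → ℂ) {x : E3} (hx : x ≠ 0)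
    (hf : HasDerivAt f f' ‖x‖) :
    diracKin (diracAnsatz f c C) x =
      Sum.elim ((c * (f' + 2 * f ‖x‖ / ‖x‖)) • C)
        ((-(f' / ‖x‖)) • Complex.I • sigmaDot x *ᵥ C) := by
  have hr : ‖x‖ ≠ 0 := norm_ne_zero_iff.mpr hx
  have hg : HasDerivAt (fun t => f t / t) ((f' * ‖x‖ - f ‖x‖ * 1) / ‖x‖ ^ 2) ‖x‖ :=
    hf.div (hasDerivAt_id' _) hr
  have hφ : DifferentiableAt ℝ (fun y => f ‖y‖ • C) x :=
    ((hasFDerivAt_comp_norm hx hf).smul_const C).differentiableAt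
  have hχ : DifferentiableAt ℝ
      (fun y => (f ‖y‖ / ‖y‖) • sigmaDot y *ᵥ (c • Complex.I • C)) x :=
    ((hasFDerivAt_comp_norm hx hg).fun_smul (sigmaDotMulVec _).hasFDerivAt).differentiableAt
  rw [diracAnsatz_eq, diracKin_sumElim hφ hχ, sigmaGrad_radial hx hf,
    sigmaGrad_radial_sigmaDot (f := fun t => f t / t) hx hg]
  ext (i | i)
  · simp only [Sum.elim_inl, Pi.smul_apply, smul_eq_mul, Complex.real_smul]
    field_simp
    push_cast
    rw [Complex.I_sq]
    ring
  · simp only [Sum.elim_inr, Pi.smul_apply, smul_eq_mul, Complex.real_smul]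
    push_cast
    ring

lemma hasDerivAt_exp_neg_mul_div_rpow (k q : ℝ) {r : ℝ} (hr : 0 < r) :
    HasDerivAt (fun t => Real.exp (-k * t) / t ^ q)
      (-(k + q / r) * (Real.exp (-k * r) / r ^ q)) r := by
  have hexp : HasDerivAt (fun t => Real.exp (-k * t)) (Real.exp (-k * r) * -k) r := by
    simpa using ((hasDerivAt_id r).const_mul (-k)).exp
  refine (hexp.div (Real.hasDerivAt_rpow_const (Or.inl hr.ne'))
    (Real.rpow_pos_of_pos hr q).ne').congr_deriv ?_
  rw [Real.rpow_sub_one hr.ne']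
  field_simp
  ring

lemma diracAnsatz_solves_diracCoulomb {f : ℝ → ℝ} {m a ν c k q : ℝ} (C : Fin 2 → ℂ) {x : E3}
    (hx : x ≠ 0) (hf : HasDerivAt f (-(k + q / ‖x‖) * f ‖x‖) ‖x‖)
    (hck : c * k = m - a) (hcma : c * (m + a) = k) (hcν : c * ν = q) (hcq : c * (2 - q) = ν) :
    diracKin (diracAnsatz f c C) x + (m : ℂ) • diracBeta *ᵥ diracAnsatz f c C x
      - ((ν / ‖x‖ : ℝ) : ℂ) • diracAnsatz f c C x - (a : ℂ) • diracAnsatz f c C x = 0 := by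
  have hckC : (c : ℂ) * k = m - a := by exact_mod_cast hck
  have hcmaC : (c : ℂ) * (m + a) = k := by exact_mod_cast hcma
  have hcνC : (c : ℂ) * ν = q := by exact_mod_cast hcν
  have hcqC : (c : ℂ) * (2 - q) = ν := by exact_mod_cast hcq
  rw [diracKin_diracAnsatz c C hx hf, diracAnsatz_eq, diracBeta_mulVec_sumElim]
  ext (i | i)
  · simp only [Sum.elim_inl, Pi.add_apply, Pi.sub_apply, Pi.smul_apply, smul_eq_mul,
      Complex.real_smul, Pi.zero_apply]
    push_cast
    linear_combination (-(C i * f ‖x‖)) * hckC + (C i * f ‖x‖ / ‖x‖) * hcqC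
  · simp only [Sum.elim_inr, Pi.add_apply, Pi.sub_apply, Pi.neg_apply, Pi.smul_apply, smul_eq_mul,
      Complex.real_smul, Pi.zero_apply, mulVec_smul]
    push_cast
    linear_combination (-(f ‖x‖ / ‖x‖ * Complex.I * (sigmaDot x *ᵥ C) i)) * hcmaC
      - (f ‖x‖ / ‖x‖ ^ 2 * Complex.I * (sigmaDot x *ᵥ C) i) * hcνC

theorem stmt_8_general (m a : ℝ) (ha : a ∈ Set.Ioo (0 : ℝ) m) (C : Fin 2 → ℂ) :
    let ν : ℝ := Real.sqrt (m ^ 2 - a ^ 2) / m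
    let φ : EuclideanSpace ℝ (Fin 3) → Fin 2 → ℂ := fun x =>
      ((Real.exp (-(Real.sqrt (m ^ 2 - a ^ 2)) * ‖x‖) / ‖x‖ ^ (1 - a / m) : ℝ) : ℂ) • C
    let χ : EuclideanSpace ℝ (Fin 3) → Fin 2 → ℂ := fun x =>
      (Real.sqrt ((m - a) / (m + a)) : ℝ) • (Complex.I • (sigmaHat x).mulVec (φ x))
    let ψ : EuclideanSpace ℝ (Fin 3) → (Fin 2 ⊕ Fin 2) → ℂ := fun x =>
      Sum.elim (φ x) (χ x)
    ∀ x : EuclideanSpace ℝ (Fin 3), x ≠ 0 →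
      diracKin ψ x + (m : ℂ) • diracBeta.mulVec (ψ x)
        - ((ν / ‖x‖ : ℝ) : ℂ) • ψ x - (a : ℂ) • ψ x = 0 := by
  intro ν φ χ ψ x hx
  obtain ⟨ha0, ham⟩ := ha
  have hm : m ≠ 0 := (ha0.trans ham).ne'
  have hma : 0 < m - a := sub_pos.mpr ham
  have hpa : 0 < m + a := by linarith
  set k := Real.sqrt (m ^ 2 - a ^ 2)
  set c := Real.sqrt ((m - a) / (m + a))
  have hk : 0 < k := Real.sqrt_pos.mpr (by nlinarith)
  have hk2 : k ^ 2 = m ^ 2 - a ^ 2 := Real.sq_sqrt (by nlinarith)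
  have hck : c * k = m - a := by
    rw [← Real.sqrt_mul (div_pos hma hpa).le,
      show (m - a) / (m + a) * (m ^ 2 - a ^ 2) = (m - a) ^ 2 by field_simp; ring,
      Real.sqrt_sq hma.le]
  have hcma : c * (m + a) = k := mul_right_cancel₀ hk.ne' (by nlinarith)
  have hcν : c * ν = 1 - a / m := by
    simp only [ν]
    field_simp
    linarith
  have hcq : c * (2 - (1 - a / m)) = ν := by
    simp only [ν]
    field_simp
    linarith
  exact diracAnsatz_solves_diracCoulomb (f := fun t => Real.exp (-k * t) / t ^ (1 - a / m)) C hx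
    (hasDerivAt_exp_neg_mul_div_rpow k (1 - a / m) (norm_pos_iff.mpr hx)) hck hcma hcν hcq

/-- **The Hardy attainers are Dirac–Coulomb eigenfunctions:** for `m > 0`, `0 < a < m`,
`ν = √(m²-a²)/m`, the spinor `ψ_C^a` solves `(-i α·∇ + mβ - ν/|x| - a) ψ_C^a = 0` on
`ℝ³ \ {0}`. -/
theorem stmt_8 (m a : ℝ) (hm : 0 < m) (ha : a ∈ Set.Ioo (0 : ℝ) m) (C : Fin 2 → ℂ) :
    let ν : ℝ := Real.sqrt (m ^ 2 - a ^ 2) / m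
    let φ : EuclideanSpace ℝ (Fin 3) → Fin 2 → ℂ := fun x =>
      ((Real.exp (-(Real.sqrt (m ^ 2 - a ^ 2)) * ‖x‖) / ‖x‖ ^ (1 - a / m) : ℝ) : ℂ) • C
    let χ : EuclideanSpace ℝ (Fin 3) → Fin 2 → ℂ := fun x =>
      (Real.sqrt ((m - a) / (m + a)) : ℝ) • (Complex.I • (sigmaHat x).mulVec (φ x))
    let ψ : EuclideanSpace ℝ (Fin 3) → (Fin 2 ⊕ Fin 2) → ℂ := fun x =>
      Sum.elim (φ x) (χ x)
    ∀ x : EuclideanSpace ℝ (Fin 3), x ≠ 0 →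
      diracKin ψ x + (m : ℂ) • diracBeta.mulVec (ψ x)
        - ((ν / ‖x‖ : ℝ) : ℂ) • ψ x - (a : ℂ) • ψ x = 0 :=
  stmt_8_general m a ha C
end
end

section
/- Let 0 < ν < 1, N = √((1−√(1−ν²))/(1+√(1−ν²))), and let W(x) be a 2×2 Hermitian matrix for each x ≠ 0. Define the 4×4 Hermitian matrix V(x) = −(ν/|x|) I₄ + [[N² (σ·x̂) W(x) (σ·x̂), i N (σ·x̂) W(x)],[−i N W(x) (σ·x̂), W(x)]]. Then the operator norm bound |x| |V(x)| ≤ ν holds if and only if every eigenvalue λ of W(x) satisfies 0 ≤ λ ≤ (ν/|x|)(1 + √(1−ν²)). -/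
open Matrix

noncomputable section

/-- The constant `N = √((1-√(1-ν²))/(1+√(1-ν²)))`. -/
def Nnu (ν : ℝ) : ℝ :=
  Real.sqrt ((1 - Real.sqrt (1 - ν ^ 2)) / (1 + Real.sqrt (1 - ν ^ 2)))

/-- The rigidity potential `V = -(ν/|x|)I₄ + [[N² σx̂ W σx̂, iN σx̂ W], [-iN W σx̂, W]]`. -/
def rigidV (ν : ℝ) (x : EuclideanSpace ℝ (Fin 3)) (W : Matrix (Fin 2) (Fin 2) ℂ) :
    Matrix (Fin 2 ⊕ Fin 2) (Fin 2 ⊕ Fin 2) ℂ :=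
  (-(ν / ‖x‖ : ℝ) : ℂ) • 1 +
    Matrix.fromBlocks
      (((Nnu ν : ℝ) ^ 2 : ℂ) • (sigmaHat x * W * sigmaHat x))
      ((Complex.I * (Nnu ν : ℝ)) • (sigmaHat x * W))
      ((-Complex.I * (Nnu ν : ℝ)) • (W * sigmaHat x))
      W

/-!
With `M := (i N σ·x̂; 1)`, a `4 × 2` matrix, one has `V = -(ν/|x|) + M W Mᴴ`, and `Mᴴ M = N² + 1`
because `(σ·x̂)² = 1`. As `V` is Hermitian, `(ν/|x|)² - V² = M (2(ν/|x|) W - (N² + 1) W²) Mᴴ`, and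
since `M` has a left inverse the bound `|x| |V| ≤ ν` is equivalent to `2(ν/|x|) W ≥ (N² + 1) W²`,
that is, to `0 ≤ λ ≤ 2(ν/|x|)/(N² + 1) = (ν/|x|)(1 + √(1 - ν²))` for every eigenvalue `λ` of `W`.
-/

open scoped ComplexOrder

namespace Matrix

variable {m n : Type*} [Fintype m] [Fintype n]

lemma star_dotProduct_self_eq_sum_norm_sq (w : n → ℂ) :
    star w ⬝ᵥ w = ((∑ i, ‖w i‖ ^ 2 : ℝ) : ℂ) := by
  simp [dotProduct, Complex.conj_mul']

variable [DecidableEq n]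

lemma forall_sum_norm_sq_mulVec_le_iff_posSemidef (V : Matrix n n ℂ) (r : ℝ) :
    (∀ u : n → ℂ, ∑ i, ‖(V *ᵥ u) i‖ ^ 2 ≤ r * ∑ i, ‖u i‖ ^ 2) ↔
      PosSemidef ((r : ℂ) • 1 - Vᴴ * V) := by
  have hquad (u : n → ℂ) : star u ⬝ᵥ (((r : ℂ) • 1 - Vᴴ * V) *ᵥ u) =
      ((r * ∑ i, ‖u i‖ ^ 2 - ∑ i, ‖(V *ᵥ u) i‖ ^ 2 : ℝ) : ℂ) := by
    rw [sub_mulVec, smul_mulVec, one_mulVec, ← mulVec_mulVec, dotProduct_sub, dotProduct_smul,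
      dotProduct_mulVec, ← star_mulVec, star_dotProduct_self_eq_sum_norm_sq,
      star_dotProduct_self_eq_sum_norm_sq]
    simp
  have hherm : ((r : ℂ) • 1 - Vᴴ * V).IsHermitian :=
    (isHermitian_one.smul (Complex.conj_ofReal r)).sub
      (isHermitian_conjTranspose_mul_self V)
  simp only [posSemidef_iff_dotProduct_mulVec, hherm, true_and, hquad, Complex.zero_le_real,
    sub_nonneg]

lemma posSemidef_mul_mul_conjTranspose_iff {M : Matrix m n ℂ} {L : Matrix n m ℂ}
    (hLM : L * M = 1) {A : Matrix n n ℂ} : PosSemidef (M * A * Mᴴ) ↔ PosSemidef A := by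
  refine ⟨fun h ↦ ?_, fun h ↦ h.mul_mul_conjTranspose_same M⟩
  have hA : L * (M * A * Mᴴ) * Lᴴ = A := by
    calc L * (M * A * Mᴴ) * Lᴴ = (L * M) * A * (L * M)ᴴ := by
          rw [conjTranspose_mul]; simp only [Matrix.mul_assoc]
      _ = A := by simp [hLM]
  simpa [hA] using h.mul_mul_conjTranspose_same L

lemma smul_one_sub_conjTranspose_mul_self_eq [DecidableEq m] {M : Matrix m n ℂ} {k : ℝ}
    (hM : Mᴴ * M = (k : ℂ) • 1) {W : Matrix n n ℂ} (hW : W.IsHermitian) (μ : ℝ) :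
    ((μ ^ 2 : ℝ) : ℂ) • 1 - (-(μ : ℂ) • 1 + M * W * Mᴴ)ᴴ * (-(μ : ℂ) • 1 + M * W * Mᴴ) =
      M * (((2 * μ : ℝ) : ℂ) • W - (k : ℂ) • (W * W)) * Mᴴ := by
  have hB : (M * W * Mᴴ)ᴴ = M * W * Mᴴ := by
    rw [conjTranspose_mul, conjTranspose_mul, conjTranspose_conjTranspose, hW.eq, Matrix.mul_assoc]
  have hBB : M * W * Mᴴ * (M * W * Mᴴ) = (k : ℂ) • (M * (W * W) * Mᴴ) := by
    calc M * W * Mᴴ * (M * W * Mᴴ) = M * W * (Mᴴ * M) * W * Mᴴ := by simp only [Matrix.mul_assoc]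
      _ = _ := by rw [hM]; simp [Matrix.mul_assoc]
  rw [conjTranspose_add, hB, conjTranspose_smul, conjTranspose_one, star_neg, Complex.star_def,
    Complex.conj_ofReal, add_mul, mul_add, mul_add, hBB]
  simp only [Matrix.mul_sub, Matrix.sub_mul, Matrix.mul_smul, Matrix.smul_mul, Matrix.mul_one,
    Matrix.one_mul, smul_smul]
  push_cast
  rw [neg_mul_neg, ← sq, two_mul, add_smul, neg_smul]
  abel

namespace IsHermitian

lemma posSemidef_smul_sub_smul_mul_self_iff {A : Matrix n n ℂ} (hA : A.IsHermitian) (a b : ℝ) :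
    PosSemidef ((a : ℂ) • A - (b : ℂ) • (A * A)) ↔
      ∀ i, 0 ≤ a * hA.eigenvalues i - b * hA.eigenvalues i ^ 2 := by
  set U : Matrix n n ℂ := (hA.eigenvectorUnitary : Matrix n n ℂ)
  have hUU : star U * U = 1 := Unitary.coe_star_mul_self _
  set D : Matrix n n ℂ := diagonal (fun i ↦ (hA.eigenvalues i : ℂ))
  have hA' : A = U * D * star U := hA.spectral_theorem
  have hAA : A * A = U * (D * D) * star U := by
    calc A * A = U * D * (star U * U) * D * star U := by rw [hA']; simp only [Matrix.mul_assoc]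
      _ = U * (D * D) * star U := by rw [hUU]; simp only [Matrix.mul_one, Matrix.mul_assoc]
  have hdiag : (a : ℂ) • A - (b : ℂ) • (A * A) =
      U * diagonal (fun i ↦ ((a * hA.eigenvalues i - b * hA.eigenvalues i ^ 2 : ℝ) : ℂ)) *
        star U := by
    calc (a : ℂ) • A - (b : ℂ) • (A * A) = U * ((a : ℂ) • D - (b : ℂ) • (D * D)) * star U := by
          rw [hAA, hA']
          simp only [Matrix.mul_sub, Matrix.sub_mul, Matrix.mul_smul, Matrix.smul_mul]
      _ = _ := by
          simp only [D, diagonal_mul_diagonal, ← diagonal_smul, diagonal_sub]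
          congr 3 with i
          simp only [Pi.smul_apply, smul_eq_mul, ← sq]
          push_cast
          ring
  rw [hdiag, Unitary.isUnit_coe.posSemidef_star_right_conjugate_iff, posSemidef_diagonal_iff]
  simp only [Complex.zero_le_real]

end IsHermitian

end Matrix

lemma mul_sub_mul_sq_nonneg_iff {a b : ℝ} (ha : 0 ≤ a) (hb : 0 < b) (t : ℝ) :
    0 ≤ a * t - b * t ^ 2 ↔ 0 ≤ t ∧ t ≤ a / b := by
  rw [le_div_iff₀ hb]
  constructor
  · intro h
    have ht : 0 ≤ t := by
      by_contra! ht
      nlinarith [mul_nonpos_of_nonneg_of_nonpos ha ht.le, mul_pos hb (mul_pos_of_neg_of_neg ht ht)]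
    refine ⟨ht, ?_⟩
    rcases ht.eq_or_lt with rfl | ht
    · simpa using ha
    · nlinarith
  · rintro ⟨ht, htb⟩
    nlinarith

lemma two_div_Nnu_sq_add_one (ν : ℝ) : 2 / (Nnu ν ^ 2 + 1) = 1 + √(1 - ν ^ 2) := by
  have hs0 : 0 ≤ √(1 - ν ^ 2) := Real.sqrt_nonneg _
  have hs1 : √(1 - ν ^ 2) ≤ 1 := Real.sqrt_le_one.2 (by nlinarith)
  rw [Nnu, Real.sq_sqrt (div_nonneg (by linarith) (by linarith))]
  field_simp
  ring

lemma sigmaHat_eq (x : EuclideanSpace ℝ (Fin 3)) :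
    sigmaHat x =
      !![((x 2 / ‖x‖ : ℝ) : ℂ), ((x 0 / ‖x‖ : ℝ) : ℂ) - Complex.I * ((x 1 / ‖x‖ : ℝ) : ℂ);
      ((x 0 / ‖x‖ : ℝ) : ℂ) + Complex.I * ((x 1 / ‖x‖ : ℝ) : ℂ), -((x 2 / ‖x‖ : ℝ) : ℂ)] := by
  simp only [sigmaHat, Pauli, Fin.sum_univ_three]
  ext i j
  fin_cases i <;> fin_cases j <;> simp [mul_comm, sub_eq_add_neg]

lemma sigmaHat_isHermitian (x : EuclideanSpace ℝ (Fin 3)) : (sigmaHat x).IsHermitian := by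
  rw [IsHermitian, sigmaHat_eq]
  ext i j
  fin_cases i <;> fin_cases j <;> simp [sub_eq_add_neg]

lemma sigmaHat_mul_self {x : EuclideanSpace ℝ (Fin 3)} (hx : x ≠ 0) :
    sigmaHat x * sigmaHat x = 1 := by
  have hx' : (‖x‖ : ℂ) ≠ 0 := by simpa using hx
  have hnorm : (x 0 : ℂ) ^ 2 + (x 1 : ℂ) ^ 2 + (x 2 : ℂ) ^ 2 = (‖x‖ : ℂ) ^ 2 := by
    exact_mod_cast (by simp [EuclideanSpace.real_norm_sq_eq, Fin.sum_univ_three] :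
      x 0 ^ 2 + x 1 ^ 2 + x 2 ^ 2 = ‖x‖ ^ 2)
  rw [sigmaHat_eq]
  ext i j
  fin_cases i <;> fin_cases j <;> simp [Matrix.mul_apply, Fin.sum_univ_two] <;> field_simp
  · linear_combination hnorm - (x 1 : ℂ) ^ 2 * Complex.I_sq
  · ring
  · ring
  · linear_combination hnorm - (x 1 : ℂ) ^ 2 * Complex.I_sq

/-- Applied to the eigenvectors `e_j` of `W`, this gives the vectors `v_j` of the paper's
eigenbasis of `V`, up to the normalisation `√(N² + 1)`. -/
def rigidFactor {n : Type*} [DecidableEq n] (N : ℝ) (S : Matrix n n ℂ) : Matrix (n ⊕ n) n ℂ :=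
  fromRows ((Complex.I * N) • S) 1

section rigidFactor

variable {n : Type*} [Fintype n] [DecidableEq n] (N : ℝ) {S : Matrix n n ℂ}

lemma rigidFactor_conjTranspose_mul_self (hS : S.IsHermitian) (hS2 : S * S = 1) :
    (rigidFactor N S)ᴴ * rigidFactor N S = ((N ^ 2 + 1 : ℝ) : ℂ) • 1 := by
  rw [rigidFactor, conjTranspose_fromRows_eq_fromCols_conjTranspose, fromCols_mul_fromRows,
    conjTranspose_smul, hS.eq, smul_mul_smul_comm, hS2, conjTranspose_one, Matrix.one_mul,
    star_mul', Complex.star_def, Complex.conj_I, Complex.conj_ofReal]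
  push_cast
  rw [add_smul, one_smul]
  congr 2
  linear_combination -(N : ℂ) ^ 2 * Complex.I_sq

lemma rigidFactor_mul_mul_conjTranspose (hS : S.IsHermitian) (W : Matrix n n ℂ) :
    rigidFactor N S * W * (rigidFactor N S)ᴴ =
      fromBlocks ((N : ℂ) ^ 2 • (S * W * S)) ((Complex.I * N) • (S * W))
        ((-Complex.I * N) • (W * S)) W := by
  rw [rigidFactor, conjTranspose_fromRows_eq_fromCols_conjTranspose, conjTranspose_smul, hS.eq,
    fromRows_mul, fromRows_mul_fromCols, star_mul', Complex.star_def, Complex.conj_I,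
    Complex.conj_ofReal]
  simp only [Matrix.smul_mul, Matrix.mul_smul, smul_smul, conjTranspose_one, Matrix.mul_one,
    Matrix.one_mul]
  congr 2
  linear_combination -(N : ℂ) ^ 2 * Complex.I_sq

end rigidFactor

lemma rigidV_eq (ν : ℝ) (x : EuclideanSpace ℝ (Fin 3)) (W : Matrix (Fin 2) (Fin 2) ℂ) :
    rigidV ν x W = -((ν / ‖x‖ : ℝ) : ℂ) • 1 +
      rigidFactor (Nnu ν) (sigmaHat x) * W * (rigidFactor (Nnu ν) (sigmaHat x))ᴴ := by
  rw [rigidV, rigidFactor_mul_mul_conjTranspose _ (sigmaHat_isHermitian x)]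

/-- **Operator norm bound for the rigidity potentials.** For `0 < ν < 1`, `x ≠ 0` and a
Hermitian `2×2` matrix `W`, the bound `|x||V(x)| ≤ ν` holds if and only if every
eigenvalue `λ` of `W` satisfies `0 ≤ λ ≤ (ν/|x|)(1 + √(1-ν²))`. -/
theorem stmt_18 (ν : ℝ) (hν : 0 < ν ∧ ν < 1) (x : EuclideanSpace ℝ (Fin 3)) (hx : x ≠ 0)
    (W : Matrix (Fin 2) (Fin 2) ℂ) (hW : W.IsHermitian) :
    (∀ u : (Fin 2 ⊕ Fin 2) → ℂ,
        ‖x‖ ^ 2 * ∑ i, ‖(rigidV ν x W).mulVec u i‖ ^ 2 ≤ ν ^ 2 * ∑ i, ‖u i‖ ^ 2)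
      ↔ ∀ i, 0 ≤ hW.eigenvalues i ∧
          hW.eigenvalues i ≤ (ν / ‖x‖) * (1 + Real.sqrt (1 - ν ^ 2)) := by
  set μ := ν / ‖x‖ with hμ
  set k := Nnu ν ^ 2 + 1
  set M := rigidFactor (Nnu ν) (sigmaHat x)
  have hk : 0 < k := by positivity
  have hM : Mᴴ * M = (k : ℂ) • 1 :=
    rigidFactor_conjTranspose_mul_self _ (sigmaHat_isHermitian x) (sigmaHat_mul_self hx)
  have hLM : ((k⁻¹ : ℝ) : ℂ) • Mᴴ * M = 1 := by
    rw [Matrix.smul_mul, hM, smul_smul, ← Complex.ofReal_mul, inv_mul_cancel₀ hk.ne',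
      Complex.ofReal_one, one_smul]
  have hscale (a b : ℝ) : ‖x‖ ^ 2 * a ≤ ν ^ 2 * b ↔ a ≤ μ ^ 2 * b := by
    rw [hμ, div_pow, div_mul_eq_mul_div, le_div_iff₀ (by positivity), mul_comm a]
  simp only [hscale]
  rw [forall_sum_norm_sq_mulVec_le_iff_posSemidef, rigidV_eq, ← hμ,
    smul_one_sub_conjTranspose_mul_self_eq hM hW, posSemidef_mul_mul_conjTranspose_iff hLM,
    hW.posSemidef_smul_sub_smul_mul_self_iff]
  have hμ0 : 0 ≤ 2 * μ := by have := hν.1; positivity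
  refine forall_congr' fun i ↦ ?_
  rw [mul_sub_mul_sq_nonneg_iff hμ0 hk, mul_comm 2, mul_div_assoc, two_div_Nnu_sq_add_one]
end
end
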